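/- Let P¹ and P⁰ be mutually absolutely continuous probability measures on ℝ^d with KL(P¹‖P⁰) + KL(P⁰‖P¹) ≤ ε for some ε ∈ [0,4). Then for every measurable scoring rule r, the AUC of r for distinguishing P¹ from P⁰ satisfies AUC_r ≤ ½ + √ε/2 − ε/8. -/

import Mathlib

/-!
Let `ν` be a measure below both `P¹` and `P⁰`. Then `ν ⊗ ν ≤ P¹ ⊗ P⁰`, and since `ν ⊗ ν` is
invariant under swapping coordinates, `1 - AUC = P(r(G₁) < r(G₀)) + ½ P(r(G₁) = r(G₀))` is at least
half the total mass `ν(Ω)²` of `ν ⊗ ν`. The overlap `ν = min (dP¹/dP⁰) 1 • P⁰` has mass `1 - TV`,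
so `AUC ≤ 1/2 + TV - TV²/2`.

With `g = dP¹/dP⁰`, the symmetrized divergence is `∫ (g - 1) log g dP⁰`. The inequality
`log t ≥ 2 (t - 1) / (t + 1)` for `t ≥ 1` (and its image under `t ↦ 1/t`) gives
`(g - 1)² ≤ (g - 1) log g · (g + 1) / 2`, and since `∫ (g + 1) / 2 dP⁰ = 1`, Cauchy–Schwarz yields
`(2 TV)² = (∫ |g - 1| dP⁰)² ≤ ε`.
-/

open MeasureTheory Real

noncomputable def klDiv {Ω : Type*} [MeasurableSpace Ω] (P Q : Measure Ω) : ℝ :=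
  ∫ x, llr P Q x ∂P

noncomputable def auc {Ω : Type*} [MeasurableSpace Ω] (P1 P0 : Measure Ω) (r : Ω → ℝ) : ℝ :=
  ((P1.prod P0) {p | r p.2 < r p.1}).toReal
    + (1 / 2) * ((P1.prod P0) {p | r p.1 = r p.2}).toReal

open Set

theorem Real.two_mul_sub_one_div_add_one_le_log {t : ℝ} (ht : 1 ≤ t) :
    2 * (t - 1) / (t + 1) ≤ log t := by
  have h := sum_range_le_log_div (x := (t - 1) / (t + 1)) (by positivity)
    ((div_lt_one (by linarith)).2 (by linarith)) 1
  have hx : (1 + (t - 1) / (t + 1)) / (1 - (t - 1) / (t + 1)) = t := by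
    field_simp
    ring
  simp only [Finset.range_one, Finset.sum_singleton, hx] at h
  rw [mul_div_assoc]
  linarith

theorem Real.two_mul_sub_one_sq_le {t : ℝ} (ht : 0 < t) :
    2 * (t - 1) ^ 2 ≤ (t + 1) * ((t - 1) * log t) := by
  rcases le_total 1 t with h | h
  · have key := two_mul_sub_one_div_add_one_le_log h
    rw [div_le_iff₀ (by linarith)] at key
    nlinarith
  · have key := two_mul_sub_one_div_add_one_le_log (one_le_inv_iff₀.2 ⟨ht, h⟩)
    rw [log_inv, show 2 * (t⁻¹ - 1) / (t⁻¹ + 1) = 2 * (1 - t) / (1 + t) by field_simp,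
      div_le_iff₀ (by linarith)] at key
    nlinarith

theorem quadratic_nonneg_of_sq_le_mul {u v w : ℝ} (hu : 0 ≤ u) (hv : 0 ≤ v) (h : w ^ 2 ≤ u * v)
    (t : ℝ) : 0 ≤ u * (t * t) + -2 * w * t + v := by
  rcases hu.eq_or_lt with rfl | hu
  · have : w = 0 := by nlinarith
    simp [this, hv]
  · have : 0 ≤ u * (u * (t * t) + -2 * w * t + v) := by nlinarith [sq_nonneg (u * t - w)]
    exact nonneg_of_mul_nonneg_right (by linarith) hu

theorem MeasureTheory.sq_integral_le_integral_mul_integral {α : Type*} [MeasurableSpace α]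
    {μ : Measure α} {u v w : α → ℝ}
    (hu : Integrable u μ) (hv : Integrable v μ) (hw : Integrable w μ)
    (hu0 : 0 ≤ᵐ[μ] u) (hv0 : 0 ≤ᵐ[μ] v) (h : ∀ᵐ x ∂μ, w x ^ 2 ≤ u x * v x) :
    (∫ x, w x ∂μ) ^ 2 ≤ (∫ x, u x ∂μ) * ∫ x, v x ∂μ := by
  have hquad (t : ℝ) :
      0 ≤ (∫ x, u x ∂μ) * (t * t) + -2 * (∫ x, w x ∂μ) * t + ∫ x, v x ∂μ := by
    have hlin : ∫ x, (u x * (t * t) + -2 * w x * t + v x) ∂μ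
        = (∫ x, u x ∂μ) * (t * t) + -2 * (∫ x, w x ∂μ) * t + ∫ x, v x ∂μ := by
      rw [integral_add ((hu.mul_const _).fun_add ((hw.const_mul _).mul_const _)) hv,
        integral_add (hu.mul_const _) ((hw.const_mul _).mul_const _),
        integral_mul_const, integral_mul_const, integral_const_mul]
    rw [← hlin]
    refine integral_nonneg_of_ae ?_
    filter_upwards [hu0, hv0, h] with x hux hvx hx
    exact quadratic_nonneg_of_sq_le_mul hux hvx hx t
  have := discrim_le_zero hquad
  rw [discrim] at this
  nlinarith

section AUC

variable {Ω : Type*} [MeasurableSpace Ω]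

theorem auc_add_auc_neg (μ ν : Measure Ω) [IsFiniteMeasure μ] [IsFiniteMeasure ν] {r : Ω → ℝ}
    (hr : Measurable r) : auc μ ν r + auc μ ν (-r) = μ.real univ * ν.real univ := by
  have h1 : Measurable fun p : Ω × Ω => r p.1 := hr.comp measurable_fst
  have h2 : Measurable fun p : Ω × Ω => r p.2 := hr.comp measurable_snd
  have hcompl : {p : Ω × Ω | r p.2 < r p.1}ᶜ = {p | r p.1 < r p.2} ∪ {p | r p.1 = r p.2} := by
    ext p
    simp [le_iff_lt_or_eq]
  have hdisj : Disjoint {p : Ω × Ω | r p.1 < r p.2} {p | r p.1 = r p.2} :=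
    disjoint_left.2 fun _ hlt heq => (ne_of_lt hlt) heq
  have hpart := measureReal_add_measureReal_compl (μ := μ.prod ν) (measurableSet_lt h2 h1)
  rw [hcompl, measureReal_union hdisj (measurableSet_eq_fun h1 h2), ← univ_prod_univ,
    measureReal_prod_prod] at hpart
  simp only [auc, Pi.neg_apply, neg_lt_neg_iff, neg_inj, ← measureReal_def]
  linarith

theorem auc_neg_self (μ : Measure Ω) [SFinite μ] (r : Ω → ℝ) : auc μ μ (-r) = auc μ μ r := by
  have hswap := MeasurePreserving.measure_preimage_equiv (f := MeasurableEquiv.prodComm)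
    (Measure.measurePreserving_swap (μ := μ) (ν := μ)) {p : Ω × Ω | r p.2 < r p.1}
  simp only [auc, Pi.neg_apply, neg_lt_neg_iff, neg_inj]
  rw [← hswap]
  rfl

theorem auc_self (μ : Measure Ω) [IsFiniteMeasure μ] {r : Ω → ℝ} (hr : Measurable r) :
    auc μ μ r = μ.real univ ^ 2 / 2 := by
  have := auc_add_auc_neg μ μ hr
  rw [auc_neg_self] at this
  linarith

theorem auc_mono {μ₁ μ₀ ν₁ ν₀ : Measure Ω} [IsFiniteMeasure μ₁] [IsFiniteMeasure μ₀]
    (h₁ : ν₁ ≤ μ₁) (h₀ : ν₀ ≤ μ₀) (r : Ω → ℝ) : auc ν₁ ν₀ r ≤ auc μ₁ μ₀ r := by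
  have h := Measure.prod_mono h₁ h₀
  unfold auc
  gcongr
  all_goals exact measure_ne_top _ _

theorem auc_le_one_sub_sq_div_two_of_le {P₁ P₀ ν : Measure Ω} [IsProbabilityMeasure P₁]
    [IsProbabilityMeasure P₀] (h₁ : ν ≤ P₁) (h₀ : ν ≤ P₀) {r : Ω → ℝ} (hr : Measurable r) :
    auc P₁ P₀ r ≤ 1 - ν.real univ ^ 2 / 2 := by
  have : IsFiniteMeasure ν := isFiniteMeasure_of_le P₁ h₁
  have hsum := auc_add_auc_neg P₁ P₀ hr
  have hmono := auc_mono h₁ h₀ (-r)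
  rw [auc_neg_self, auc_self ν hr] at hmono
  simp only [probReal_univ, mul_one] at hsum
  linarith

end AUC

section Divergence

variable {α : Type*} [MeasurableSpace α] {μ ν : Measure α}

/-- The total variation distance of `μ` and `ν`, computed from the density `dμ/dν`; it is the
total variation distance only when `μ ≪ ν`. -/
noncomputable def tvDist (μ ν : Measure α) : ℝ :=
  (∫ x, |(μ.rnDeriv ν x).toReal - 1| ∂ν) / 2

theorem tvDist_nonneg : 0 ≤ tvDist μ ν :=
  div_nonneg (integral_nonneg fun _ => abs_nonneg _) zero_le_two

theorem withDensity_min_rnDeriv_one_le_right :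
    ν.withDensity (fun x => min (μ.rnDeriv ν x) 1) ≤ ν := by
  conv_rhs => rw [← withDensity_one (μ := ν)]
  exact withDensity_mono (ae_of_all _ fun _ => min_le_right _ _)

theorem withDensity_min_rnDeriv_one_le_left [μ.HaveLebesgueDecomposition ν] (h : μ ≪ ν) :
    ν.withDensity (fun x => min (μ.rnDeriv ν x) 1) ≤ μ := by
  conv_rhs => rw [← Measure.withDensity_rnDeriv_eq μ ν h]
  exact withDensity_mono (ae_of_all _ fun _ => min_le_left _ _)

theorem measureReal_withDensity_min_rnDeriv_one [IsProbabilityMeasure μ] [IsProbabilityMeasure ν]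
    (h : μ ≪ ν) :
    (ν.withDensity (fun x => min (μ.rnDeriv ν x) 1)).real univ = 1 - tvDist μ ν := by
  set g := fun x => (μ.rnDeriv ν x).toReal
  have hg : Integrable g ν := Measure.integrable_toReal_rnDeriv
  have hmin : ∀ᵐ x ∂ν, (min (μ.rnDeriv ν x) 1).toReal = (g x + 1 - |g x - 1|) / 2 := by
    filter_upwards [Measure.rnDeriv_lt_top μ ν] with x hx
    rw [ENNReal.toReal_min hx.ne ENNReal.one_ne_top, ENNReal.toReal_one]
    rcases le_total (g x) 1 with h | h
    · rw [min_eq_left h, abs_of_nonpos (by linarith)]; ring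
    · rw [min_eq_right h, abs_of_nonneg (by linarith)]; ring
  rw [measureReal_def, withDensity_apply _ MeasurableSet.univ, Measure.restrict_univ,
    ← integral_toReal ((Measure.measurable_rnDeriv μ ν).min measurable_const).aemeasurable
      (ae_of_all _ fun x => (min_le_right _ _).trans_lt ENNReal.one_lt_top),
    integral_congr_ae hmin, integral_div, integral_sub (hg.fun_add (integrable_const 1))
      (hg.sub' (integrable_const 1)).abs, integral_add hg (integrable_const 1),
    Measure.integral_toReal_rnDeriv h, tvDist]
  simp only [probReal_univ, integral_const, smul_eq_mul, mul_one]
  ring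

theorem auc_le_of_tvDist {P₁ P₀ : Measure α} [IsProbabilityMeasure P₁] [IsProbabilityMeasure P₀]
    (h : P₁ ≪ P₀) {r : α → ℝ} (hr : Measurable r) :
    auc P₁ P₀ r ≤ 1 / 2 + tvDist P₁ P₀ - tvDist P₁ P₀ ^ 2 / 2 := by
  have := auc_le_one_sub_sq_div_two_of_le (withDensity_min_rnDeriv_one_le_left h)
    withDensity_min_rnDeriv_one_le_right hr
  rw [measureReal_withDensity_min_rnDeriv_one h] at this
  linarith

theorem integrable_llr_of_integrable_llr_symm [SigmaFinite μ] [SigmaFinite ν] (h : ν ≪ μ)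
    (hν : Integrable (llr ν μ) ν) : Integrable (llr μ ν) ν :=
  hν.neg.congr (neg_llr h)

theorem klDiv_eq_neg_integral_llr_symm [SigmaFinite μ] [SigmaFinite ν] (h : ν ≪ μ) :
    klDiv ν μ = -∫ x, llr μ ν x ∂ν := by
  rw [klDiv, ← integral_neg]
  refine integral_congr_ae ?_
  filter_upwards [neg_llr h] with x hx
  rw [← hx, Pi.neg_apply, neg_neg]

theorem integrable_sub_one_mul_log_rnDeriv [SigmaFinite μ] [SigmaFinite ν] (hμν : μ ≪ ν)
    (hνμ : ν ≪ μ) (hμ : Integrable (llr μ ν) μ) (hν : Integrable (llr ν μ) ν) :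
    Integrable (fun x => ((μ.rnDeriv ν x).toReal - 1) * log (μ.rnDeriv ν x).toReal) ν := by
  refine ((integrable_rnDeriv_mul_log_iff hμν).2 hμ).sub
    (integrable_llr_of_integrable_llr_symm hνμ hν) |>.congr (ae_of_all _ fun x => ?_)
  simp only [Pi.sub_apply, llr]
  ring

theorem klDiv_add_klDiv_eq_integral [SigmaFinite μ] [SigmaFinite ν] (hμν : μ ≪ ν)
    (hνμ : ν ≪ μ) (hμ : Integrable (llr μ ν) μ) (hν : Integrable (llr ν μ) ν) :
    klDiv μ ν + klDiv ν μ
      = ∫ x, ((μ.rnDeriv ν x).toReal - 1) * log (μ.rnDeriv ν x).toReal ∂ν := by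
  rw [klDiv_eq_neg_integral_llr_symm hνμ, klDiv, ← integral_rnDeriv_mul_log hμν,
    ← sub_eq_add_neg, ← integral_sub ((integrable_rnDeriv_mul_log_iff hμν).2 hμ)
      (integrable_llr_of_integrable_llr_symm hνμ hν)]
  congr 1 with x
  simp only [llr]
  ring

theorem sq_two_mul_tvDist_le_klDiv_add_klDiv [IsProbabilityMeasure μ] [IsProbabilityMeasure ν]
    (hμν : μ ≪ ν) (hνμ : ν ≪ μ) (hμ : Integrable (llr μ ν) μ) (hν : Integrable (llr ν μ) ν) :
    (2 * tvDist μ ν) ^ 2 ≤ klDiv μ ν + klDiv ν μ := by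
  set g := fun x => (μ.rnDeriv ν x).toReal
  have hg : Integrable g ν := Measure.integrable_toReal_rnDeriv
  have hgpos : ∀ᵐ x ∂ν, 0 < g x := by
    filter_upwards [Measure.rnDeriv_pos' hνμ, Measure.rnDeriv_lt_top μ ν] with x h0 htop
    exact ENNReal.toReal_pos h0.ne' htop.ne
  have hmean : ∫ x, (g x + 1) / 2 ∂ν = 1 := by
    rw [integral_div, integral_add hg (integrable_const 1), Measure.integral_toReal_rnDeriv hμν]
    simp
  calc (2 * tvDist μ ν) ^ 2 = (∫ x, |g x - 1| ∂ν) ^ 2 := by rw [tvDist]; ring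
    _ ≤ (∫ x, (g x - 1) * log (g x) ∂ν) * ∫ x, (g x + 1) / 2 ∂ν := by
      refine sq_integral_le_integral_mul_integral
        (integrable_sub_one_mul_log_rnDeriv hμν hνμ hμ hν)
        ((hg.add (integrable_const 1)).div_const 2) (hg.sub' (integrable_const 1)).abs ?_ ?_ ?_
      · filter_upwards [hgpos] with x hx
        have := Real.two_mul_sub_one_sq_le hx
        exact nonneg_of_mul_nonneg_right (this.trans' (by positivity)) (by linarith)
      · filter_upwards [hgpos] with x hx
        positivity
      · filter_upwards [hgpos] with x hx
        have := Real.two_mul_sub_one_sq_le hx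
        rw [sq_abs]
        nlinarith
    _ = klDiv μ ν + klDiv ν μ := by
      rw [hmean, mul_one, klDiv_add_klDiv_eq_integral hμν hνμ hμ hν]

end Divergence

theorem auc_le_of_symmetrized_kl {d : ℕ}
    (P1 P0 : Measure (Fin d → ℝ)) [IsProbabilityMeasure P1] [IsProbabilityMeasure P0]
    (h10 : P1 ≪ P0) (h01 : P0 ≪ P1)
    (hInt10 : Integrable (llr P1 P0) P1) (hInt01 : Integrable (llr P0 P1) P0)
    (ε : ℝ) (hε0 : 0 ≤ ε) (hε4 : ε < 4)
    (hKL : klDiv P1 P0 + klDiv P0 P1 ≤ ε)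
    (r : (Fin d → ℝ) → ℝ) (hr : Measurable r) :
    auc P1 P0 r ≤ 1 / 2 + Real.sqrt ε / 2 - ε / 8 := by
  set t := tvDist P1 P0
  have ht0 : 0 ≤ t := tvDist_nonneg
  have ht : 2 * t ≤ √ε := Real.le_sqrt_of_sq_le
    ((sq_two_mul_tvDist_le_klDiv_add_klDiv h10 h01 hInt10 hInt01).trans hKL)
  have hsqrt : √ε < 2 := by
    rw [Real.sqrt_lt' zero_lt_two]
    linarith
  calc auc P1 P0 r ≤ 1 / 2 + t - t ^ 2 / 2 := auc_le_of_tvDist h10 hr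
    _ ≤ 1 / 2 + √ε / 2 - (√ε) ^ 2 / 8 := by nlinarith
    _ = 1 / 2 + √ε / 2 - ε / 8 := by rw [Real.sq_sqrt hε0]
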